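/- In the transfinite construction over a full model N: for every ordinal α, if t ∼_α τ then for all canonical terms t₀ ∈ T_τ one has t t₀ ⇝_{α+1} ⊤. -/

import Mathlib

/-! Infrastructure: the transfinite model construction over a full model of
classical higher-order logic, following Czajka, "A semantic approach to illative
combinatory logic", Section 4. -/

namespace ILM

/-- Type-free λ-terms over a set `C` of primitive constants (de Bruijn representation). -/
inductive Tm (C : Type) : Type
  | var : Nat → Tm C
  | const : C → Tm C
  | app : Tm C → Tm C → Tm C
  | lam : Tm C → Tm C

namespace Tm

variable {C : Type}

/-- Renaming of free de Bruijn variables. -/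
def rename (f : Nat → Nat) : Tm C → Tm C
  | .var n => .var (f n)
  | .const c => .const c
  | .app a b => .app (a.rename f) (b.rename f)
  | .lam a => .lam (a.rename fun n => match n with | 0 => 0 | m + 1 => f m + 1)

/-- Shift all free variables up by one. -/
def lift (t : Tm C) : Tm C := t.rename (· + 1)

/-- Simultaneous substitution. -/
def bind (σ : Nat → Tm C) : Tm C → Tm C
  | .var n => σ n
  | .const c => .const c
  | .app a b => .app (a.bind σ) (b.bind σ)
  | .lam a => .lam (a.bind fun n => match n with | 0 => .var 0 | m + 1 => (σ m).lift)

/-- Substitution of `s` for the variable `0` (β-contraction of `(λ.t) s`). -/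
def subst0 (t s : Tm C) : Tm C := t.bind fun n => match n with | 0 => s | m + 1 => .var m

end Tm

/-- Extended types `T⁺`: the constructors generate all expressions
`o | B | arr | ω | ε`; the grammar `T⁺ ::= T₁ | ω | ε`, `T₁ ::= T | T₁→T₁ | ω→T₁`
is captured by the predicate `IsT1` below. -/
inductive ETy (B : Type) : Type
  | o : ETy B
  | base : B → ETy B
  | arr : ETy B → ETy B → ETy B
  | omega : ETy B
  | eps : ETy B
deriving DecidableEq

/-- Membership in `T₁` (so `T⁺ = T₁ ∪ {ω, ε}`). -/
inductive IsT1 {B : Type} : ETy B → Prop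
  | o : IsT1 .o
  | base (b : B) : IsT1 (.base b)
  | arr {τ1 τ2 : ETy B} : IsT1 τ1 → IsT1 τ2 → IsT1 (.arr τ1 τ2)
  | omegaArr {τ2 : ETy B} : IsT1 τ2 → IsT1 (.arr .omega τ2)

/-- Membership in `T⁺`. -/
def IsTp {B : Type} (τ : ETy B) : Prop := IsT1 τ ∨ τ = .omega ∨ τ = .eps

/-- The normalized arrow `τ₁ → τ₂`, implementing the notational conventions
`τ→ε = ε` (for `τ ≠ ε`), `ε→τ = ω` and `τ→ω = ω`. -/
def arrN {B : Type} : ETy B → ETy B → ETy B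
  | _, .omega => .omega
  | .eps, _ => .omega
  | _, .eps => .eps
  | τ1, τ2 => .arr τ1 τ2

/-- The rank of a type. -/
def rank {B : Type} : ETy B → Nat
  | .arr τ1 τ2 => max (rank τ1 + 1) (rank τ2)
  | _ => 1

/-- A canonical system over domains `D` for the base types: the primitive
constants `Σ⁺ = {Ξ, L} ∪ {A_τ : τ ∈ B} ∪ ⋃_τ Σ_τ`, the sets `T_τ` of canonical
terms of each type, the distinguished canonical constants `⊤, ⊥` of type `o`,
and the function `F` associating to each canonical term of a function type its
set-theoretic function, as constructed in the paper from a full model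
`N = ⟨{D_τ}, I⟩` of classical higher-order logic.  The fields axiomatize the
construction: the sets of canonical terms of distinct types are disjoint sets of
closed normal terms (`T_ω` is the set of all terms, `T_ε = ∅`), for `τ₁ ≠ ω`
the canonical terms of type `τ₁→τ₂` are constants corresponding bijectively
(via `F`) to *all* set-theoretic functions from `T_{τ₁}` to `T_{τ₂}` (this is
where fullness of `N` enters), the canonical terms of type `ω→τ₂` are the terms
`λx.ρ` with `ρ ∈ T_{τ₂}` (with `F` giving constant functions), the canonical
terms of base type `b` correspond bijectively to the domain `D b`, and those
of type `o` are exactly `⊤` and `⊥`. -/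
structure CanSys (B : Type) (D : B → Type) where
  /-- the primitive constants `Σ⁺` -/
  C : Type
  cXi : C
  cL : C
  cA : B → C
  /-- the sets `T_τ` of canonical terms -/
  TT : ETy B → Set (Tm C)
  /-- the canonical constant `⊤ ∈ Σ_o` -/
  top : Tm C
  /-- the canonical constant `⊥ ∈ Σ_o` -/
  bot : Tm C
  /-- `F τ₁ τ₂ ρ t` : the value at `t ∈ T_{τ₁}` of the function associated with
  the canonical term `ρ ∈ T_{τ₁→τ₂}` -/
  F : ETy B → ETy B → Tm C → Tm C → Tm C
  hXiL : cXi ≠ cL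
  hXiA : ∀ b, cXi ≠ cA b
  hLA : ∀ b, cL ≠ cA b
  hAinj : Function.Injective cA
  TT_omega : TT .omega = Set.univ
  TT_eps : TT .eps = ∅
  TT_invalid : ∀ τ : ETy B, ¬ IsT1 τ → τ ≠ .omega → TT τ = ∅
  TT_o : TT .o = {top, bot}
  top_ne_bot : top ≠ bot
  TT_const : ∀ τ : ETy B, IsT1 τ → (∀ τ2, τ ≠ .arr .omega τ2) →
    ∀ t ∈ TT τ, ∃ c : C, t = .const c
  TT_base_equiv : ∀ b : B, Nonempty (D b ≃ TT (.base b))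
  TT_omega_arr : ∀ τ2 : ETy B, IsT1 τ2 → TT (.arr .omega τ2) = Tm.lam '' TT τ2
  F_omega : ∀ τ2 : ETy B, ∀ ρ ∈ TT τ2, ∀ t : Tm C, F .omega τ2 (.lam ρ) t = ρ
  F_mapsto : ∀ τ1 τ2 : ETy B, IsT1 (.arr τ1 τ2) →
    ∀ ρ ∈ TT (.arr τ1 τ2), ∀ t ∈ TT τ1, F τ1 τ2 ρ t ∈ TT τ2
  F_full : ∀ τ1 τ2 : ETy B, IsT1 (.arr τ1 τ2) → τ1 ≠ .omega →
    ∀ g : Tm C → Tm C, (∀ t ∈ TT τ1, g t ∈ TT τ2) →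
      ∃ ρ ∈ TT (.arr τ1 τ2), ∀ t ∈ TT τ1, F τ1 τ2 ρ t = g t
  F_inj : ∀ τ1 τ2 : ETy B, IsT1 (.arr τ1 τ2) → τ1 ≠ .omega →
    ∀ ρ ∈ TT (.arr τ1 τ2), ∀ ρ' ∈ TT (.arr τ1 τ2),
      (∀ t ∈ TT τ1, F τ1 τ2 ρ t = F τ1 τ2 ρ' t) → ρ = ρ'
  TT_disj : ∀ τ τ' : ETy B, τ ≠ τ' → τ ≠ .omega → τ' ≠ .omega →
    Disjoint (TT τ) (TT τ')
  prim_notin : ∀ τ : ETy B, τ ≠ .omega →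
    Tm.const cXi ∉ TT τ ∧ Tm.const cL ∉ TT τ ∧ ∀ b, Tm.const (cA b) ∉ TT τ
  cover : ∀ c : C, c = cXi ∨ c = cL ∨ (∃ b, c = cA b) ∨
    ∃ τ : ETy B, τ ≠ .omega ∧ Tm.const c ∈ TT τ

namespace CanSys

variable {B : Type} {D : B → Type} (S : CanSys B D)

/-- The term `Ξ`. -/
def XiT : Tm S.C := .const S.cXi

/-- The term `L`. -/
def LT : Tm S.C := .const S.cL

/-- The term `A_b`. -/
def AT (b : B) : Tm S.C := .const (S.cA b)

/-- `K t = λx.t` with `x ∉ FV(t)`. -/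
def Kt (t : Tm S.C) : Tm S.C := .lam t.lift

/-- `H t = L (K t)`. -/
def Ht (t : Tm S.C) : Tm S.C := .app S.LT (S.Kt t)

/-- The term `H = λx. L (K x)`. -/
def Hterm : Tm S.C := .lam (.app S.LT (.lam (.var 1)))

/-- `F t₁ t₂`, written out according to the notational convention:
`λf. Ξ t₁ (λx. t₂ (f x))` if `t₂` is not a λ-abstraction, and
`λf. Ξ t₁ (λx. q₂[z/(f x)])` if `t₂ = λz. q₂`. -/
def Ft (t1 t2 : Tm S.C) : Tm S.C :=
  .lam (.app (.app S.XiT t1.lift)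
    (match t2 with
     | .lam b => .lam (b.bind fun n => match n with
         | 0 => .app (.var 1) (.var 0)
         | m + 1 => .var (m + 2))
     | t2 => .lam (.app t2.lift.lift (.app (.var 1) (.var 0)))))

end CanSys


mutual
  /-- One-step reduction `→_{≤α}` of the reduction system `R_α`: the context
  closure of β- and η-reduction together with the rules `c t → F(c)(ρ₁)` for
  canonical constants `c ∈ Σ_{τ₁→τ₂}` (`τ₁ ≠ ω`) and `t ≻_{<α} ρ₁`. -/
  inductive Step {B : Type} {D : B → Type} (S : CanSys B D) :
      Ordinal.{0} → Tm S.C → Tm S.C → Prop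
    | beta (α : Ordinal.{0}) (t s : Tm S.C) : Step S α (.app (.lam t) s) (t.subst0 s)
    | eta (α : Ordinal.{0}) (t : Tm S.C) : Step S α (.lam (.app t.lift (.var 0))) t
    | crule {α γ : Ordinal.{0}} (hγ : γ < α) {τ1 τ2 : ETy B} (h1 : τ1 ≠ .omega)
        {c : Tm S.C} (hc : c ∈ S.TT (.arr τ1 τ2)) {ρ1 : Tm S.C} (hρ1 : ρ1 ∈ S.TT τ1)
        {t : Tm S.C} (hs : Succ S γ t ρ1) :
        Step S α (.app c t) (S.F τ1 τ2 c ρ1)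
    | appL {α : Ordinal.{0}} {t t' : Tm S.C} (s : Tm S.C) :
        Step S α t t' → Step S α (.app t s) (.app t' s)
    | appR (t : Tm S.C) {α : Ordinal.{0}} {s s' : Tm S.C} :
        Step S α s s' → Step S α (.app t s) (.app t s')
    | lam {α : Ordinal.{0}} {t t' : Tm S.C} :
        Step S α t t' → Step S α (.lam t) (.lam t')

  /-- Many-step reduction `↠_{≤α}` (the reflexive-transitive closure of `→_{≤α}`). -/
  inductive Steps {B : Type} {D : B → Type} (S : CanSys B D) :
      Ordinal.{0} → Tm S.C → Tm S.C → Prop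
    | refl (α : Ordinal.{0}) (t : Tm S.C) : Steps S α t t
    | tail {α : Ordinal.{0}} {t u v : Tm S.C} :
        Steps S α t u → Step S α u v → Steps S α t v

  /-- `t ⇝_α ρ` : `t ↠_{≤α} t' ≻_α ρ` for some `t'`. -/
  inductive Lead {B : Type} {D : B → Type} (S : CanSys B D) :
      Ordinal.{0} → Tm S.C → Tm S.C → Prop
    | mk {α : Ordinal.{0}} {t t' ρ : Tm S.C} :
        Steps S α t t' → Succ S α t' ρ → Lead S α t ρ

  /-- `t ⇝_{<α} ρ` : `t ⇝_γ ρ` for some `γ < α`. -/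
  inductive LeadLt {B : Type} {D : B → Type} (S : CanSys B D) :
      Ordinal.{0} → Tm S.C → Tm S.C → Prop
    | mk {α γ : Ordinal.{0}} {t ρ : Tm S.C} :
        γ < α → Lead S γ t ρ → LeadLt S α t ρ

  /-- The typing relation `t ∼_α τ` (Definition 4.4), by the rules
  (A), (H), (Kω), (Kε), (F) and (Fω). -/
  inductive Sim {B : Type} {D : B → Type} (S : CanSys B D) :
      Ordinal.{0} → Tm S.C → ETy B → Prop
    | ofA (α : Ordinal.{0}) (b : B) : Sim S α (S.AT b) (.base b)
    | ofH (α : Ordinal.{0}) : Sim S α S.Hterm .o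
    | ofKom {α : Ordinal.{0}} {t : Tm S.C} :
        LeadLt S α t S.top → Sim S α (S.Kt t) .omega
    | ofKeps {α : Ordinal.{0}} {t : Tm S.C} :
        LeadLt S α t S.bot → Sim S α (S.Kt t) .eps
    | ofF {α γ1 γ2 : Ordinal.{0}} (h1 : γ1 < α) (h2 : γ2 < α)
        {t1 t2 : Tm S.C} {τ1 τ2 : ETy B} :
        Sim S γ1 t1 τ1 → Sim S γ2 t2 τ2 → Sim S α (S.Ft t1 t2) (arrN τ1 τ2)
    | ofFom {α γ : Ordinal.{0}} (hγ : γ < α) {t1 t2 : Tm S.C} :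
        Sim S γ t1 .eps → Sim S α (S.Ft t1 t2) .omega

  /-- The relation `t ≻_α ρ` between terms and canonical terms (Definition 4.5). -/
  inductive Succ {B : Type} {D : B → Type} (S : CanSys B D) :
      Ordinal.{0} → Tm S.C → Tm S.C → Prop
    /- `ρ ≻_α ρ` for canonical `ρ` -/
    | refl {τ : ETy B} (hτ : τ ≠ .omega) {ρ : Tm S.C} (hρ : ρ ∈ S.TT τ)
        (α : Ordinal.{0}) : Succ S α ρ ρ
    /- `t ≻_α ρ` when `ρ` has canonical type `τ₁→τ₂` (possibly `τ₁ = ω`) and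
       `t t₁ ⇝_{<α} F(ρ)(t₁)` for all `t₁ ∈ T_{τ₁}` -/
    | fn {τ1 τ2 : ETy B} {ρ : Tm S.C} (hρ : ρ ∈ S.TT (.arr τ1 τ2))
        {α : Ordinal.{0}} {t : Tm S.C}
        (h : ∀ t1 ∈ S.TT τ1, LeadLt S α (.app t t1) (S.F τ1 τ2 ρ t1)) :
        Succ S α t ρ
    /- base postulates for `t ≻_α ⊤` -/
    | topLA (α : Ordinal.{0}) (b : B) : Succ S α (.app S.LT (S.AT b)) S.top
    | topLH (α : Ordinal.{0}) : Succ S α (.app S.LT S.Hterm) S.top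
    | topA {b : B} {c : Tm S.C} (hc : c ∈ S.TT (.base b)) (α : Ordinal.{0}) :
        Succ S α (.app (S.AT b) c) S.top
    | topH {c : Tm S.C} (hc : c = S.top ∨ c = S.bot) (α : Ordinal.{0}) :
        Succ S α (S.Ht c) S.top
    /- `(Ξ_i^⊤)` -/
    | xiTop {α : Ordinal.{0}} (hα : 0 < α) {t1 t2 : Tm S.C} {τ : ETy B}
        (h1 : Sim S α t1 τ) (h2 : ∀ t3 ∈ S.TT τ, LeadLt S α (.app t2 t3) S.top) :
        Succ S α (.app (.app S.XiT t1) t2) S.top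
    /- `(Ξ_H^⊤)` -/
    | xiHTop {α : Ordinal.{0}} (hα : 0 < α) {t1 t2 : Tm S.C} {τ : ETy B}
        (h1 : Sim S α t1 τ)
        (h2 : ∀ t3 ∈ S.TT τ, LeadLt S α (S.Ht (.app t2 t3)) S.top) :
        Succ S α (S.Ht (.app (.app S.XiT t1) t2)) S.top
    /- `(F_L^⊤)`, first case: `t₁ ∼_α ε` -/
    | flTopEps {α : Ordinal.{0}} (hα : 0 < α) {t1 t2 : Tm S.C}
        (h1 : Sim S α t1 .eps) :
        Succ S α (.app S.LT (S.Ft t1 t2)) S.top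
    /- `(F_L^⊤)`, second case: `t₁ ∼_α τ` for some `τ ≠ ε` and `L t₂ ⇝_{<α} ⊤` -/
    | flTop {α : Ordinal.{0}} (hα : 0 < α) {t1 t2 : Tm S.C} {τ : ETy B}
        (hτ : τ ≠ .eps) (h1 : Sim S α t1 τ) (h2 : LeadLt S α (.app S.LT t2) S.top) :
        Succ S α (.app S.LT (S.Ft t1 t2)) S.top
    /- `(H_i^⊤)` -/
    | hiTop {α : Ordinal.{0}} (hα : 0 < α) {t1 : Tm S.C} (h : LeadLt S α t1 S.top) :
        Succ S α (S.Ht t1) S.top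
    /- `(Ξ^⊥)` -/
    | xiBot {α : Ordinal.{0}} (hα : 0 < α) {t1 t2 : Tm S.C} {τ : ETy B}
        {γ : Ordinal.{0}} (hγ : γ < α)
        (hH : Succ S γ (S.Ht (.app (.app S.XiT t1) t2)) S.top)
        (h1 : Sim S α t1 τ) {t3 : Tm S.C} (h3 : t3 ∈ S.TT τ)
        (hb : LeadLt S α (.app t2 t3) S.bot) :
        Succ S α (.app (.app S.XiT t1) t2) S.bot
end


variable {B : Type} {D : B → Type}

/-- `t ≻ ρ` : the stable relation `≻_ζ` at the closure ordinal (by monotonicity,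
it equals the union of the `≻_α` over all ordinals `α`). -/
def SuccS (S : CanSys B D) (t ρ : Tm S.C) : Prop := ∃ α : Ordinal.{0}, Succ S α t ρ

/-- `t ∼ τ` : the stable typing relation. -/
def SimS (S : CanSys B D) (t : Tm S.C) (τ : ETy B) : Prop := ∃ α : Ordinal.{0}, Sim S α t τ

/-- One-step reduction of the stable reduction system `R`. -/
def StepR (S : CanSys B D) (t t' : Tm S.C) : Prop := ∃ α : Ordinal.{0}, Step S α t t'

/-- `t ↠_R t'` : many-step reduction in the stable reduction system `R`. -/
def StepsR (S : CanSys B D) : Tm S.C → Tm S.C → Prop := Relation.ReflTransGen (StepR S)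

/-- `t ⇝ ρ` : the stable relation `⇝_ζ`. -/
def LeadR (S : CanSys B D) (t ρ : Tm S.C) : Prop :=
  ∃ t', StepsR S t t' ∧ SuccS S t' ρ

/-- `t =_{≤α} t'` : convertibility in `R_α`. -/
def ConvLe (S : CanSys B D) (α : Ordinal.{0}) : Tm S.C → Tm S.C → Prop :=
  Relation.EqvGen (Step S α)

/-- `t =_R t'` : convertibility in the stable reduction system `R`. -/
def ConvR (S : CanSys B D) : Tm S.C → Tm S.C → Prop :=
  Relation.EqvGen (StepR S)

/-- Filling the boxes `□₁, …, □ₖ` of a `k`-ary context (a λ-term over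
`Σ⁺ ∪ {□₁, …, □ₖ}`) with terms, in such a way that the free variables of the
inserted terms do not become bound. -/
def fillk {C : Type} {k : Nat} (ts : Fin k → Tm C) : Tm (Fin k ⊕ C) → Tm C
  | .var n => .var n
  | .const (.inl i) => ts i
  | .const (.inr c) => .const c
  | .app a b => .app (fillk ts a) (fillk ts b)
  | .lam a => .lam (fillk (fun i => (ts i).lift) a)

/-- Filling a unary context. -/
def fill1 {C : Type} (Ctx : Tm (Fin 1 ⊕ C)) (t : Tm C) : Tm C :=
  fillk (fun _ => t) Ctx

/-- `t ≫^n t'` (at the stable level): there are a `k`-ary context `Cx`, terms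
`t₁, …, t_k` and canonical terms `ρ₁, …, ρ_k` of ranks `≤ n` with `tᵢ ≻ ρᵢ`,
`t = Cx[t₁,…,t_k]` and `t' = Cx[ρ₁,…,ρ_k]`. -/
def Gg (S : CanSys B D) (n : Nat) (t t' : Tm S.C) : Prop :=
  ∃ (k : Nat) (Cx : Tm (Fin k ⊕ S.C)) (ts ρs : Fin k → Tm S.C),
    (∀ i, SuccS S (ts i) (ρs i)) ∧
    (∀ i, ∃ τ : ETy B, τ ≠ .omega ∧ ρs i ∈ S.TT τ ∧ rank τ ≤ n) ∧
    t = fillk ts Cx ∧ t' = fillk ρs Cx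

/-!
Induction on `α`, for the head-β-contracted application `appRed t t₀` rather than `t t₀`:
in case (F), `F t₁ t₂ t₀` reduces to `Ξ t₁ M` where `M t₃` β-reduces to the contractum of
`t₂ (t₀ t₃)` when `t₂` is an abstraction, not to `t₂ (t₀ t₃)` itself. The argument `t₀ t₃`
reduces to the canonical term `F(t₀)(t₃)` (by β if `t₀ ∈ T_{ω→τ₂}`, by the constant rule,
legitimate since `0 < α`, otherwise), the induction hypothesis for `t₂` applies to it, and
`(Ξ_i^⊤)` concludes. Canonical terms of types in `T₁` are closed, which lets the reduction of
the argument be carried under the binders of `t₂`.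
-/

namespace Tm

variable {C : Type}

def up (σ : ℕ → Tm C) : ℕ → Tm C
  | 0 => .var 0
  | m + 1 => (σ m).lift

def single (s : Tm C) : ℕ → Tm C
  | 0 => s
  | m + 1 => .var m

theorem bind_lam (σ : ℕ → Tm C) (a : Tm C) : (lam a).bind σ = lam (a.bind (up σ)) := rfl

theorem subst0_eq_bind (t s : Tm C) : t.subst0 s = t.bind (single s) := rfl

theorem rename_congr {f g : ℕ → ℕ} (h : ∀ n, f n = g n) (t : Tm C) :
    t.rename f = t.rename g := by
  rw [funext h]

theorem bind_congr {σ σ' : ℕ → Tm C} (h : ∀ n, σ n = σ' n) (t : Tm C) :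
    t.bind σ = t.bind σ' := by
  rw [funext h]

theorem rename_rename (t : Tm C) (f g : ℕ → ℕ) :
    (t.rename f).rename g = t.rename (g ∘ f) := by
  induction t generalizing f g with
  | var n => rfl
  | const c => rfl
  | app a b iha ihb => simp only [rename, iha, ihb]
  | lam a ih =>
    simp only [rename, ih]
    exact congrArg lam (rename_congr (fun n => by cases n <;> rfl) a)

theorem rename_bind (t : Tm C) (f : ℕ → ℕ) (σ : ℕ → Tm C) :
    (t.rename f).bind σ = t.bind (σ ∘ f) := by
  induction t generalizing f σ with
  | var n => rfl
  | const c => rfl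
  | app a b iha ihb => simp only [rename, bind, iha, ihb]
  | lam a ih =>
    simp only [rename, bind, ih]
    exact congrArg lam (bind_congr (fun n => by cases n <;> rfl) a)

theorem bind_rename (t : Tm C) (σ : ℕ → Tm C) (f : ℕ → ℕ) :
    (t.bind σ).rename f = t.bind fun n => (σ n).rename f := by
  induction t generalizing σ f with
  | var n => rfl
  | const c => rfl
  | app a b iha ihb => simp only [rename, bind, iha, ihb]
  | lam a ih =>
    simp only [rename, bind, ih]
    refine congrArg lam (bind_congr (fun n => ?_) a)
    cases n with
    | zero => rfl
    | succ m => simp only [lift, rename_rename]; rfl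

theorem bind_bind (t : Tm C) (σ σ' : ℕ → Tm C) :
    (t.bind σ).bind σ' = t.bind fun n => (σ n).bind σ' := by
  induction t generalizing σ σ' with
  | var n => rfl
  | const c => rfl
  | app a b iha ihb => simp only [bind, iha, ihb]
  | lam a ih =>
    simp only [bind, ih]
    refine congrArg lam (bind_congr (fun n => ?_) a)
    cases n with
    | zero => rfl
    | succ m => simp only [lift, rename_bind, bind_rename]; rfl

theorem bind_var (t : Tm C) : t.bind var = t := by
  induction t with
  | var n => rfl
  | const c => rfl
  | app a b iha ihb => simp only [bind, iha, ihb]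
  | lam a ih =>
    simp only [bind]
    rw [bind_congr (σ' := var) (fun n => by cases n <;> rfl), ih]

theorem rename_eq_bind (t : Tm C) (f : ℕ → ℕ) : t.rename f = t.bind (var ∘ f) := by
  induction t generalizing f with
  | var n => rfl
  | const c => rfl
  | app a b iha ihb => simp only [rename, bind, iha, ihb]
  | lam a ih =>
    simp only [rename, bind, ih]
    exact congrArg lam (bind_congr (fun n => by cases n <;> rfl) a)

theorem rename_id (t : Tm C) : t.rename id = t := by
  rw [rename_eq_bind]; exact bind_var t

theorem lift_bind (t : Tm C) (σ : ℕ → Tm C) : t.lift.bind σ = t.bind fun n => σ (n + 1) :=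
  rename_bind t _ σ

theorem subst0_lift (t s : Tm C) : t.lift.subst0 s = t := by
  rw [subst0_eq_bind, lift_bind]; exact bind_var t

/-- A term without free variables. -/
def IsClosed (t : Tm C) : Prop := ∀ σ : ℕ → Tm C, t.bind σ = t

theorem IsClosed.rename {t : Tm C} (h : t.IsClosed) (f : ℕ → ℕ) : t.rename f = t := by
  rw [rename_eq_bind]; exact h _

end Tm

def appRed {C : Type} : Tm C → Tm C → Tm C
  | .lam q, u => q.subst0 u
  | t, u => .app t u

namespace CanSys

variable (S : CanSys B D)

/-- The scope of `λx` in `F t₁ t₂ = λf. Ξ t₁ (λx. t₂ (f x))`, with `f, x` the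
de Bruijn indices `1, 0`. -/
def ftScope : Tm S.C → Tm S.C
  | .lam b => b.bind fun n => match n with
      | 0 => .app (.var 1) (.var 0)
      | m + 1 => .var (m + 2)
  | t2 => .app t2.lift.lift (.app (.var 1) (.var 0))

theorem Ft_eq (t1 t2 : Tm S.C) :
    S.Ft t1 t2 = .lam (.app (.app S.XiT t1.lift) (.lam (S.ftScope t2))) := by
  cases t2 <;> rfl

theorem ftScope_bind_subst0 (t2 t0 t3 : Tm S.C) :
    ((S.ftScope t2).bind (Tm.up (Tm.single t0))).subst0 t3 = appRed t2 (.app t0 t3) := by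
  rw [Tm.subst0_eq_bind, Tm.bind_bind]
  cases t2 with
  | lam b =>
    rw [ftScope, Tm.bind_bind]
    refine Tm.bind_congr (fun n => ?_) b
    cases n with
    | zero => exact congrArg (Tm.app · t3) (Tm.subst0_lift t0 t3)
    | succ m => rfl
  | var _ | const _ | app _ _ =>
    refine congrArg₂ Tm.app ?_ (congrArg (Tm.app · t3) (Tm.subst0_lift t0 t3))
    rw [Tm.lift_bind, Tm.lift_bind]
    exact Tm.bind_var _

end CanSys

variable {S : CanSys B D}

theorem steps_iff_reflTransGen {α : Ordinal.{0}} {t u : Tm S.C} :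
    Steps S α t u ↔ Relation.ReflTransGen (Step S α) t u where
  mp := go
  mpr h := by
    induction h with
    | refl => exact .refl _ _
    | tail _ hs ih => exact ih.tail hs
where
  go {t u : Tm S.C} : Steps S α t u → Relation.ReflTransGen (Step S α) t u
    | .refl _ _ => .refl
    | .tail h s => (go h).tail s

theorem Steps.trans {α : Ordinal.{0}} {t u v : Tm S.C} (h1 : Steps S α t u)
    (h2 : Steps S α u v) : Steps S α t v :=
  steps_iff_reflTransGen.2 ((steps_iff_reflTransGen.1 h1).trans (steps_iff_reflTransGen.1 h2))

theorem Steps.single {α : Ordinal.{0}} {t u : Tm S.C} (h : Step S α t u) : Steps S α t u :=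
  (Steps.refl α t).tail h

theorem Steps.lift {α : Ordinal.{0}} (g : Tm S.C → Tm S.C)
    (hg : ∀ t u, Step S α t u → Step S α (g t) (g u)) {t u : Tm S.C} (h : Steps S α t u) :
    Steps S α (g t) (g u) :=
  steps_iff_reflTransGen.2 (Relation.ReflTransGen.lift g hg _ _ (steps_iff_reflTransGen.1 h))

theorem Step.mono {α α' : Ordinal.{0}} (hle : α ≤ α') {t t' : Tm S.C} :
    Step S α t t' → Step S α' t t'
  | .beta _ _ _ => .beta _ _ _
  | .eta _ _ => .eta _ _
  | .crule hγ h1 hc hρ1 hs => .crule (hγ.trans_le hle) h1 hc hρ1 hs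
  | .appL s h => .appL s (h.mono hle)
  | .appR s h => .appR s (h.mono hle)
  | .lam h => .lam (h.mono hle)

theorem Steps.mono {α α' : Ordinal.{0}} (hle : α ≤ α') {t u : Tm S.C} (h : Steps S α t u) :
    Steps S α' t u :=
  steps_iff_reflTransGen.2
    (Relation.ReflTransGen.mono (fun _ _ hs => hs.mono hle) _ _ (steps_iff_reflTransGen.1 h))

theorem LeadLt.mono {α α' : Ordinal.{0}} (hle : α ≤ α') {t ρ : Tm S.C} :
    LeadLt S α t ρ → LeadLt S α' t ρ
  | .mk hγ hl => .mk (hγ.trans_le hle) hl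

theorem Sim.mono {α α' : Ordinal.{0}} (hle : α ≤ α') {t : Tm S.C} {τ : ETy B} :
    Sim S α t τ → Sim S α' t τ
  | .ofA _ b => .ofA _ b
  | .ofH _ => .ofH _
  | .ofKom h => .ofKom (h.mono hle)
  | .ofKeps h => .ofKeps (h.mono hle)
  | .ofF h1 h2 s1 s2 => .ofF (h1.trans_le hle) (h2.trans_le hle) s1 s2
  | .ofFom hγ s => .ofFom (hγ.trans_le hle) s

theorem Succ.mono {α α' : Ordinal.{0}} (hle : α ≤ α') {t ρ : Tm S.C} :
    Succ S α t ρ → Succ S α' t ρ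
  | .refl hτ hρ _ => .refl hτ hρ _
  | .fn hρ h => .fn hρ fun t1 h1 => (h t1 h1).mono hle
  | .topLA _ b => .topLA _ b
  | .topLH _ => .topLH _
  | .topA hc _ => .topA hc _
  | .topH hc _ => .topH hc _
  | .xiTop hα h1 h2 =>
    .xiTop (hα.trans_le hle) (h1.mono hle) fun t3 h3 => (h2 t3 h3).mono hle
  | .xiHTop hα h1 h2 =>
    .xiHTop (hα.trans_le hle) (h1.mono hle) fun t3 h3 => (h2 t3 h3).mono hle
  | .flTopEps hα h1 => .flTopEps (hα.trans_le hle) (h1.mono hle)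
  | .flTop hα hτ h1 h2 => .flTop (hα.trans_le hle) hτ (h1.mono hle) (h2.mono hle)
  | .hiTop hα h => .hiTop (hα.trans_le hle) (h.mono hle)
  | .xiBot hα hγ hH h1 h3 hb =>
    .xiBot (hα.trans_le hle) (hγ.trans_le hle) hH (h1.mono hle) h3 (hb.mono hle)

theorem Lead.mono {α α' : Ordinal.{0}} (hle : α ≤ α') {t ρ : Tm S.C} :
    Lead S α t ρ → Lead S α' t ρ
  | .mk hs hsucc => .mk (hs.mono hle) (hsucc.mono hle)

theorem Steps.lead {α : Ordinal.{0}} {t u ρ : Tm S.C} (h : Steps S α t u) :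
    Lead S α u ρ → Lead S α t ρ
  | .mk hs hsucc => .mk (h.trans hs) hsucc

theorem Steps.bind {α : Ordinal.{0}} {σ σ' : ℕ → Tm S.C}
    (hσ : ∀ n (f : ℕ → ℕ), Steps S α ((σ n).rename f) ((σ' n).rename f)) (q : Tm S.C) :
    Steps S α (q.bind σ) (q.bind σ') := by
  induction q generalizing σ σ' with
  | var n =>
    have h := hσ n id
    rwa [Tm.rename_id, Tm.rename_id] at h
  | const c => exact .refl _ _
  | app a b iha ihb =>
    exact ((iha hσ).lift (Tm.app · _) fun _ _ => .appL _).trans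
      ((ihb hσ).lift (Tm.app _) fun _ _ => .appR _)
  | lam a ih =>
    refine (ih fun n f => ?_).lift Tm.lam fun _ _ => .lam
    cases n with
    | zero => exact .refl _ _
    | succ m => simpa only [Tm.up, Tm.lift, Tm.rename_rename] using hσ m (f ∘ (· + 1))

theorem steps_app_appRed (α : Ordinal.{0}) (t u : Tm S.C) :
    Steps S α (.app t u) (appRed t u) := by
  cases t with
  | lam q => exact .single (.beta α q u)
  | var _ | const _ | app _ _ => exact .refl _ _

theorem steps_appRed_right {α : Ordinal.{0}} (t : Tm S.C) {u u' : Tm S.C}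
    (h : ∀ f : ℕ → ℕ, Step S α (u.rename f) (u'.rename f)) :
    Steps S α (appRed t u) (appRed t u') := by
  cases t with
  | lam q =>
    refine Steps.bind (fun n f => ?_) q
    cases n with
    | zero => exact .single (h f)
    | succ m => exact .refl _ _
  | var _ | const _ | app _ _ =>
    have h := h id
    rw [Tm.rename_id, Tm.rename_id] at h
    exact .single (.appR _ h)

theorem IsT1.ne_omega {τ : ETy B} (h : IsT1 τ) : τ ≠ .omega := by
  rintro rfl; nomatch h

theorem IsT1.arr_right {τ1 τ2 : ETy B} : IsT1 (.arr τ1 τ2) → IsT1 τ2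
  | .arr _ h | .omegaArr h => h

theorem IsT1.arr_left {τ1 τ2 : ETy B} (h : IsT1 (.arr τ1 τ2)) (hω : τ1 ≠ .omega) : IsT1 τ1 := by
  cases h with
  | arr h1 _ => exact h1
  | omegaArr _ => exact absurd rfl hω

theorem isClosed_of_mem_TT {τ : ETy B} (hτ : IsT1 τ) {ρ : Tm S.C} (hρ : ρ ∈ S.TT τ) :
    ρ.IsClosed := by
  induction hτ generalizing ρ with
  | @omegaArr τ2 h2 ih =>
    rw [S.TT_omega_arr _ h2] at hρ
    obtain ⟨ρ', hρ', rfl⟩ := hρ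
    intro σ
    rw [Tm.bind_lam, ih hρ']
  | o | base _ =>
    obtain ⟨c, rfl⟩ := S.TT_const _ (by constructor) (fun _ he => by cases he) ρ hρ
    exact fun _ => rfl
  | arr h1 h2 =>
    obtain ⟨c, rfl⟩ := S.TT_const _ (.arr h1 h2)
      (fun _ he => h1.ne_omega (ETy.arr.inj he).1) ρ hρ
    exact fun _ => rfl

theorem step_rename_app_F {α : Ordinal.{0}} (hα : 0 < α) {τ1 τ2 : ETy B}
    (hT : IsT1 (.arr τ1 τ2)) {ρ t3 : Tm S.C} (hρ : ρ ∈ S.TT (.arr τ1 τ2)) (ht3 : t3 ∈ S.TT τ1)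
    (f : ℕ → ℕ) : Step S α ((Tm.app ρ t3).rename f) ((S.F τ1 τ2 ρ t3).rename f) := by
  rw [(isClosed_of_mem_TT hT.arr_right (S.F_mapsto _ _ hT ρ hρ t3 ht3)).rename f]
  change Step S α (.app (ρ.rename f) (t3.rename f)) _
  rw [(isClosed_of_mem_TT hT hρ).rename f]
  by_cases hω : τ1 = .omega
  · subst hω
    rw [S.TT_omega_arr _ hT.arr_right] at hρ
    obtain ⟨ρ0, hρ0, rfl⟩ := hρ
    rw [S.F_omega τ2 ρ0 hρ0 t3]
    have hβ := Step.beta (S := S) α ρ0 (t3.rename f)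
    rwa [Tm.subst0_eq_bind, isClosed_of_mem_TT hT.arr_right hρ0] at hβ
  · rw [(isClosed_of_mem_TT (hT.arr_left hω) ht3).rename f]
    exact .crule hα hω hρ ht3 (.refl hω ht3 0)

theorem lead_appRed_Ft {α : Ordinal.{0}} {t1 t2 t0 : Tm S.C} {τ1 : ETy B}
    (h1 : Sim S (α + 1) t1 τ1)
    (h2 : ∀ t3 ∈ S.TT τ1, Lead S α (appRed t2 (.app t0 t3)) S.top) :
    Lead S (α + 1) (appRed (S.Ft t1 t2) t0) S.top := by
  rw [S.Ft_eq]
  refine .mk (.refl _ _) ?_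
  change Succ S _ (.app (.app S.XiT (t1.lift.subst0 t0)) _) _
  rw [Tm.subst0_lift]
  refine .xiTop (pos_of_gt (lt_add_one α)) h1 fun t3 ht3 => .mk (lt_add_one α) ?_
  refine Steps.lead (.single ?_) (h2 t3 ht3)
  rw [← S.ftScope_bind_subst0]
  exact .beta _ _ _

theorem forall_lead_appRed_app {α γ : Ordinal.{0}} (hγ : γ < α) {t2 t0 : Tm S.C}
    {τ1 τ2 : ETy B} (ih : ∀ u ∈ S.TT τ2, Lead S (γ + 1) (appRed t2 u) S.top)
    (ht0 : t0 ∈ S.TT (arrN τ1 τ2)) :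
    ∀ t3 ∈ S.TT τ1, Lead S α (appRed t2 (.app t0 t3)) S.top := by
  intro t3 ht3
  have hγα : γ + 1 ≤ α := Order.add_one_le_of_lt hγ
  by_cases hε1 : τ1 = .eps
  · simp [hε1, S.TT_eps] at ht3
  by_cases hω2 : τ2 = .omega
  · subst hω2
    exact (ih _ (by simp [S.TT_omega])).mono hγα
  by_cases hε2 : τ2 = .eps
  · subst hε2
    cases τ1 <;> simp_all [arrN, S.TT_eps]
  have harrN : arrN τ1 τ2 = .arr τ1 τ2 := by
    cases τ1 <;> cases τ2 <;> simp_all [arrN]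
  rw [harrN] at ht0
  have hT : IsT1 (.arr τ1 τ2) := by
    by_contra hn
    simp [S.TT_invalid _ hn (by simp)] at ht0
  have hρ := S.F_mapsto _ _ hT t0 ht0 t3 ht3
  exact (steps_appRed_right t2 (step_rename_app_F (pos_of_gt hγ) hT ht0 ht3)).lead
    ((ih _ hρ).mono hγα)

theorem lead_appRed_of_sim {α : Ordinal.{0}} {t : Tm S.C} {τ : ETy B} (h : Sim S α t τ) :
    ∀ t0 ∈ S.TT τ, Lead S (α + 1) (appRed t t0) S.top := by
  induction α using WellFoundedLT.induction generalizing t τ with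
  | ind α ih =>
  intro t0 ht0
  cases h with
  | ofA b => exact .mk (.refl _ _) (.topA ht0 _)
  | ofH =>
    rw [S.TT_o] at ht0
    exact .mk (.refl _ _) (.topH ht0 _)
  | @ofKom _ t hlt =>
    obtain ⟨hγ, hl⟩ := hlt
    change Lead S _ (t.lift.subst0 t0) _
    rw [Tm.subst0_lift]
    exact hl.mono (hγ.trans (lt_add_one α)).le
  | ofKeps _ => simp [S.TT_eps] at ht0
  | ofFom hγ h1 =>
    exact lead_appRed_Ft (h1.mono (hγ.trans (lt_add_one α)).le) (by simp [S.TT_eps])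
  | ofF hγ1 hγ2 h1 h2 =>
    exact lead_appRed_Ft (h1.mono (hγ1.trans (lt_add_one α)).le)
      (forall_lead_appRed_app hγ2 (ih _ hγ2 h2) ht0)

/-- **Lemma 4.19.**  If `t ∼_α τ` then for all canonical terms `t₀ ∈ T_τ` we have
`t t₀ ⇝_{α+1} ⊤`. -/
theorem sim_correct {B : Type} [Finite B] {D : B → Type} (hD : ∀ b, Nonempty (D b))
    (S : CanSys B D) (α : Ordinal.{0}) (t : Tm S.C) (τ : ETy B)
    (h : Sim S α t τ) :
    ∀ t0 ∈ S.TT τ, Lead S (α + 1) (.app t t0) S.top :=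
  fun t0 ht0 => (steps_app_appRed _ t t0).lead (lead_appRed_of_sim h t0 ht0)

end ILM
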